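/- arXiv:2312.15469 — 3 statements merged into one kernel-verified Lean document; each statement's English description precedes it below -/
import Mathlib

section
/- Let W ~ χ²_d (chi-squared with d degrees of freedom). Then for any t > 0, P(W > d + 2√(dt) + 2t) ≤ exp(−t). -/
open MeasureTheory ProbabilityTheory

/-- The chi-squared distribution with `d` degrees of freedom (the law of the sum of squares
of `d` independent standard Gaussians), realized as the Gamma distribution with shape `d/2`
and rate `1/2`. -/
noncomputable def chiSqMeasure (d : ℕ) : Measure ℝ := gammaMeasure ((d : ℝ) / 2) (1 / 2)

/-- Pointwise tilting identity: the exponential factor turns one Gamma density into a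
constant multiple of another. -/
lemma gamma_tilt (s A l x : ℝ) (hA : 0 < A) (hdpos : 0 < l) (hl : l < 1/2)
    (hquot : (1/2 - l) ≠ 0) :
    Real.exp (l * (x - A)) * ProbabilityTheory.gammaPDFReal s (1/2) x
      = (Real.exp (-(l * A)) * ((1/2) / (1/2 - l)) ^ s)
        * ProbabilityTheory.gammaPDFReal s (1/2 - l) x := by
  unfold ProbabilityTheory.gammaPDFReal
  by_cases hx : 0 ≤ x
  · rw [if_pos hx, if_pos hx]
    have h2 : (0:ℝ) < 1/2 - l := by linarith
    have hmul : ((1/2 : ℝ) / (1/2 - l)) ^ s * (1/2 - l) ^ s = (1/2 : ℝ) ^ s := by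
      rw [← Real.mul_rpow (by positivity) h2.le, div_mul_cancel₀]
      exact hquot
    have hexp : Real.exp (l * (x - A)) * Real.exp (-(1/2 * x))
        = Real.exp (-(l * A)) * Real.exp (-((1/2 - l) * x)) := by
      rw [← Real.exp_add, ← Real.exp_add]; ring_nf
    calc Real.exp (l * (x - A)) * ((1/2:ℝ) ^ s / Real.Gamma s * x ^ (s-1) * Real.exp (-(1/2 * x)))
        = (Real.exp (l * (x - A)) * Real.exp (-(1/2 * x)))
            * ((1/2:ℝ) ^ s / Real.Gamma s * x ^ (s-1)) := by ring
      _ = (Real.exp (-(l * A)) * Real.exp (-((1/2 - l) * x)))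
            * ((((1/2:ℝ) / (1/2 - l)) ^ s * (1/2 - l) ^ s) / Real.Gamma s * x ^ (s-1)) := by
          rw [hexp, hmul]
      _ = _ := by ring
  · rw [if_neg hx, if_neg hx]; ring

/-- **Chi-squared tail bound (Laurent–Massart).** If `W ∼ χ²_d`, then for all `t > 0`,
`P(W > d + 2√(dt) + 2t) ≤ exp(−t)`. -/
theorem chiSq_tail_bound (d : ℕ) (hd : 0 < d) (t : ℝ) (ht : 0 < t) :
    chiSqMeasure d {x : ℝ | (d : ℝ) + 2 * Real.sqrt (d * t) + 2 * t < x}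
      ≤ ENNReal.ofReal (Real.exp (-t)) := by
  have hd' : (0:ℝ) < d := Nat.cast_pos.mpr hd
  set rt := Real.sqrt ((d:ℝ) * t) with hrt
  have hrt0 : 0 < rt := Real.sqrt_pos.mpr (by positivity)
  have hrtsq : rt ^ 2 = (d:ℝ) * t := Real.sq_sqrt (by positivity)
  set A : ℝ := (d:ℝ) + 2 * rt + 2 * t with hAdef
  have hAd : (d:ℝ) < A := by nlinarith
  have hA0 : (0:ℝ) < A := hd'.trans hAd
  set l : ℝ := (A - d) / (2 * A) with hldef
  have hl0 : 0 < l := div_pos (by nlinarith) (by positivity)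
  have hl2 : l < 1/2 := by
    rw [hldef, div_lt_iff₀ (by positivity)]; nlinarith
  have hlr : (1:ℝ)/2 - l = (d:ℝ) / (2 * A) := by
    rw [hldef]; field_simp; try ring
  set s : ℝ := (d:ℝ) / 2 with hsdef
  have hs0 : 0 < s := by positivity
  set C : ℝ := Real.exp (-(l * A)) * ((1/2) / (1/2 - l)) ^ s with hCdef
  have hC0 : 0 ≤ C := by
    apply mul_nonneg (Real.exp_pos _).le
    apply Real.rpow_nonneg
    rw [hlr]; positivity
  -- the key numerical bound
  have hCle : C ≤ Real.exp (-t) := by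
    have hquot : (1/2 : ℝ) / (1/2 - l) = A / d := by
      rw [hlr]; field_simp
    have hlA : l * A = rt + t := by
      rw [hldef]; field_simp; ring
    have hlog : Real.log (A / d) ≤ 2 * rt / d := by
      rw [Real.log_le_iff_le_exp (by positivity)]
      have hq := Real.quadratic_le_exp_of_nonneg (x := 2 * rt / d) (by positivity)
      have h1 : (2 * rt / (d:ℝ)) ^ 2 / 2 = 2 * t / (d:ℝ) := by
        field_simp
        nlinarith [hrtsq]
      have h2 : A / (d:ℝ) = 1 + 2 * rt / (d:ℝ) + 2 * t / (d:ℝ) := by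
        rw [hAdef]; field_simp; try ring
      linarith
    have hpow : ((1/2 : ℝ) / (1/2 - l)) ^ s = Real.exp (s * Real.log (A / d)) := by
      rw [hquot, Real.rpow_def_of_pos (by positivity), mul_comm]
    rw [hCdef, hpow, ← Real.exp_add]
    apply Real.exp_le_exp.mpr
    have : s * Real.log (A / d) ≤ rt := by
      calc s * Real.log (A / d) ≤ s * (2 * rt / d) := by
            apply mul_le_mul_of_nonneg_left hlog hs0.le
        _ = rt := by rw [hsdef]; field_simp
    rw [hlA]; linarith
  -- measure computation
  have hset : {x : ℝ | (d : ℝ) + 2 * Real.sqrt (d * t) + 2 * t < x} = Set.Ioi A := rfl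
  rw [hset, chiSqMeasure, ProbabilityTheory.gammaMeasure, withDensity_apply _ measurableSet_Ioi]
  have hmeas : Measurable fun x => ProbabilityTheory.gammaPDF s (1/2 - l) x :=
    (ProbabilityTheory.measurable_gammaPDFReal s (1/2 - l)).ennreal_ofReal
  calc ∫⁻ x in Set.Ioi A, ProbabilityTheory.gammaPDF s (1/2) x
      ≤ ∫⁻ x in Set.Ioi A,
          ENNReal.ofReal (Real.exp (l * (x - A))) * ProbabilityTheory.gammaPDF s (1/2) x := by
        apply setLIntegral_mono' measurableSet_Ioi
        intro x hx
        have h1 : (1:ℝ) ≤ Real.exp (l * (x - A)) := by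
          rw [Real.one_le_exp_iff]
          have : A < x := hx
          nlinarith
        calc ProbabilityTheory.gammaPDF s (1/2) x
            = 1 * ProbabilityTheory.gammaPDF s (1/2) x := (one_mul _).symm
          _ ≤ _ := by
              apply mul_le_mul_left
              rw [← ENNReal.ofReal_one]
              exact ENNReal.ofReal_le_ofReal h1
    _ ≤ ∫⁻ x, ENNReal.ofReal (Real.exp (l * (x - A))) * ProbabilityTheory.gammaPDF s (1/2) x :=
        setLIntegral_le_lintegral _ _
    _ = ∫⁻ x, ENNReal.ofReal C * ProbabilityTheory.gammaPDF s (1/2 - l) x := by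
        apply lintegral_congr
        intro x
        rw [ProbabilityTheory.gammaPDF, ProbabilityTheory.gammaPDF,
          ← ENNReal.ofReal_mul (Real.exp_pos _).le, ← ENNReal.ofReal_mul hC0,
          gamma_tilt s A l x hA0 hl0 hl2 (by rw [hlr]; positivity)]
    _ = ENNReal.ofReal C * ∫⁻ x, ProbabilityTheory.gammaPDF s (1/2 - l) x :=
        lintegral_const_mul _ hmeas
    _ = ENNReal.ofReal C := by
        rw [ProbabilityTheory.lintegral_gammaPDF_eq_one hs0 (by rw [hlr]; positivity), mul_one]
    _ ≤ ENNReal.ofReal (Real.exp (-t)) := ENNReal.ofReal_le_ofReal hCle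
end

section
/- Let A₁, …, A_m be i.i.d. symmetric positive semidefinite random d×d matrices of the form A_j = v_j v_jᵀ with (E‖v_j‖⁴)^{1/4} = μ < ∞, and let M̄ = E[A_1]. Then for every 0 < δ < 1, with probability at least 1 − δ, ‖(1/m)∑_{j=1}^m A_j − M̄‖_op ≤ (√2 μ²/√m) · δ^{−1/2} · log(4d/δ). -/
open MeasureTheory ProbabilityTheory Matrix

/-- The `ℓ₂ → ℓ₂` operator norm of a real matrix. -/
noncomputable def opNorm {n m : ℕ} (M : Matrix (Fin n) (Fin m) ℝ) : ℝ :=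
  ‖LinearMap.toContinuousLinearMap (Matrix.toEuclideanLin M)‖

/-!
The operator norm of `M̃ - M̄`, where `M̃ = m⁻¹ ∑ⱼ vⱼ vⱼᵀ`, is bounded by its Frobenius norm, so it
suffices to control `F = ∑ᵢⱼ (M̃ - M̄)ᵢⱼ²`. Each entry of `M̃` is the average of `m` i.i.d. copies of `vᵢ vⱼ`, hence
`E F ≤ m⁻¹ ∑ᵢⱼ E (vᵢ vⱼ)² = m⁻¹ E ‖v‖⁴ = μ⁴ / m`, and Markov's inequality for `F` gives
`‖M̃ - M̄‖ ≤ μ² / √(m δ)` with probability at least `1 - δ`. The stated threshold is larger by the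
factor `√2 log (4d/δ) ≥ 1`.
-/

lemma opNorm_le_sqrt_sum_sq {n k : ℕ} (M : Matrix (Fin n) (Fin k) ℝ) :
    opNorm M ≤ √(∑ i, ∑ j, M i j ^ 2) := by
  refine ContinuousLinearMap.opNorm_le_bound _ (Real.sqrt_nonneg _) fun x => ?_
  rw [EuclideanSpace.norm_eq, EuclideanSpace.norm_eq, ← Real.sqrt_mul (by positivity)]
  refine Real.sqrt_le_sqrt ?_
  rw [Finset.sum_mul]
  refine Finset.sum_le_sum fun i _ => ?_
  have happ : (LinearMap.toContinuousLinearMap (toEuclideanLin M)) x i = ∑ j, M i j * x j := rfl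
  simpa only [happ, Real.norm_eq_abs, sq_abs] using Finset.sum_mul_sq_le_sq_mul_sq _ (M i) x

namespace EuclideanSpace

variable {ι : Type*} [Fintype ι]

lemma sum_sum_mul_sq (x : EuclideanSpace ℝ ι) : ∑ i, ∑ j, (x i * x j) ^ 2 = ‖x‖ ^ 4 := by
  have hnorm : ‖x‖ ^ 2 = ∑ i, x i ^ 2 := by
    simp [EuclideanSpace.norm_eq, Real.sq_sqrt (by positivity : 0 ≤ ∑ i, x i ^ 2)]
  simp_rw [mul_pow, ← Finset.mul_sum, ← Finset.sum_mul, ← hnorm]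
  ring

lemma mul_sq_le_norm_pow_four (x : EuclideanSpace ℝ ι) (i j : ι) :
    (x i * x j) ^ 2 ≤ ‖x‖ ^ 4 := by
  rw [← sum_sum_mul_sq]
  calc (x i * x j) ^ 2 ≤ ∑ j', (x i * x j') ^ 2 :=
        Finset.single_le_sum (f := fun j' => (x i * x j') ^ 2) (fun _ _ => sq_nonneg _)
          (Finset.mem_univ j)
    _ ≤ ∑ i', ∑ j', (x i' * x j') ^ 2 :=
        Finset.single_le_sum (f := fun i' => ∑ j', (x i' * x j') ^ 2)
          (fun _ _ => by positivity) (Finset.mem_univ i)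

end EuclideanSpace

section Probability

variable {Ω : Type*} [MeasurableSpace Ω] {P : Measure Ω}

lemma ofReal_one_sub_le_measure [IsProbabilityMeasure P] {E : Set Ω} {δ : ℝ} (hδ : 0 ≤ δ)
    (hE : P Eᶜ ≤ ENNReal.ofReal δ) : ENNReal.ofReal (1 - δ) ≤ P E := by
  have hcover : 1 ≤ P E + P Eᶜ := by
    simpa [measure_univ, Set.union_compl_self] using measure_union_le (μ := P) E Eᶜ
  calc ENNReal.ofReal (1 - δ) = 1 - ENNReal.ofReal δ := by
        rw [ENNReal.ofReal_sub _ hδ, ENNReal.ofReal_one]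
    _ ≤ 1 - P Eᶜ := tsub_le_tsub_left hE _
    _ ≤ P E := tsub_le_iff_right.2 hcover

-- Markov's inequality, also for `ε = 0`: this case occurs when `v = 0` almost surely.
lemma measure_lt_le_of_integral_le_mul [IsFiniteMeasure P] {F : Ω → ℝ} (hF0 : 0 ≤ F)
    (hF : Integrable F P) {ε δ : ℝ} (hε : 0 ≤ ε) (h : ∫ ω, F ω ∂P ≤ ε * δ) :
    P {ω | ε < F ω} ≤ ENNReal.ofReal δ := by
  obtain rfl | hε := hε.eq_or_lt
  · have hzero : F =ᵐ[P] 0 :=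
      (integral_eq_zero_iff_of_nonneg hF0 hF).1
        (le_antisymm (by simpa using h) (integral_nonneg hF0))
    refine (measure_mono_null (fun ω hω => ?_) (ae_iff.1 hzero)).trans_le zero_le
    exact (show 0 < F ω from hω).ne'
  · have hmarkov := mul_meas_ge_le_integral_of_nonneg (.of_forall hF0) hF ε
    calc P {ω | ε < F ω} ≤ P {ω | ε ≤ F ω} := measure_mono fun ω (hω : ε < F ω) => hω.le
      _ = ENNReal.ofReal (P {ω | ε ≤ F ω}).toReal :=
          (ENNReal.ofReal_toReal (measure_ne_top _ _)).symm
      _ ≤ ENNReal.ofReal δ := ENNReal.ofReal_le_ofReal (le_of_mul_le_mul_left (hmarkov.trans h) hε)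

lemma integral_sum_sum {ι ι' : Type*} [Fintype ι] [Fintype ι'] {f : ι → ι' → Ω → ℝ}
    (hf : ∀ i i', Integrable (f i i') P) :
    ∫ ω, ∑ i, ∑ i', f i i' ω ∂P = ∑ i, ∑ i', ∫ ω, f i i' ω ∂P := by
  rw [integral_finsetSum _ fun i _ => integrable_finsetSum _ fun i' _ => hf i i']
  exact Finset.sum_congr rfl fun i _ => integral_finsetSum _ fun i' _ => hf i i'

lemma integral_sq_average_sub_eq [IsFiniteMeasure P] {κ : Type*} [Fintype κ] {f : κ → Ω → ℝ}
    {j₀ : κ} (hf : MemLp (f j₀) 2 P) (hindep : Pairwise fun j j' => IndepFun (f j) (f j') P)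
    (hident : ∀ j, IdentDistrib (f j) (f j₀) P P) :
    ∫ ω, ((Fintype.card κ : ℝ)⁻¹ * ∑ j, f j ω - P[f j₀]) ^ 2 ∂P
      = (Fintype.card κ : ℝ)⁻¹ * Var[f j₀; P] := by
  have : Nonempty κ := ⟨j₀⟩
  have hcard : (Fintype.card κ : ℝ) ≠ 0 := Nat.cast_ne_zero.2 Fintype.card_ne_zero
  have hmem : ∀ j, MemLp (f j) 2 P := fun j => (hident j).memLp_iff.2 hf
  have hmean : P[∑ j, f j] = (Fintype.card κ : ℝ) * P[f j₀] := by
    simp_rw [Finset.sum_apply]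
    rw [integral_finsetSum _ fun j _ => (hmem j).integrable one_le_two]
    simp [(hident _).integral_eq]
  have hvar : Var[∑ j, f j; P] = (Fintype.card κ : ℝ) * Var[f j₀; P] := by
    rw [IndepFun.variance_sum (fun j _ => hmem j) fun j _ j' _ hjj' => hindep hjj']
    simp [(hident _).variance_eq]
  calc ∫ ω, ((Fintype.card κ : ℝ)⁻¹ * ∑ j, f j ω - P[f j₀]) ^ 2 ∂P
      = (Fintype.card κ : ℝ)⁻¹ ^ 2 * ∫ ω, ((∑ j, f j) ω - P[∑ j, f j]) ^ 2 ∂P := by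
        rw [← integral_const_mul, hmean]
        congr with ω
        rw [Finset.sum_apply]
        field_simp
    _ = (Fintype.card κ : ℝ)⁻¹ * Var[f j₀; P] := by
        rw [← variance_eq_integral (memLp_finsetSum' _ fun j _ => hmem j).aemeasurable, hvar]
        field_simp

section SecondMoment

variable {ι κ : Type*} [Fintype κ]

noncomputable def empiricalSecondMoment (x : κ → EuclideanSpace ℝ ι) : Matrix ι ι ℝ :=
  (Fintype.card κ : ℝ)⁻¹ • ∑ j, vecMulVec (x j) (x j)

noncomputable def secondMoment (P : Measure Ω) (X : Ω → EuclideanSpace ℝ ι) : Matrix ι ι ℝ :=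
  of fun i i' => ∫ ω, X ω i * X ω i' ∂P

lemma empiricalSecondMoment_sub_secondMoment_apply (x : κ → EuclideanSpace ℝ ι)
    (X : Ω → EuclideanSpace ℝ ι) (i i' : ι) :
    (empiricalSecondMoment x - secondMoment P X) i i'
      = (Fintype.card κ : ℝ)⁻¹ * ∑ j, x j i * x j i' - P[fun ω => X ω i * X ω i'] := by
  simp [empiricalSecondMoment, secondMoment, Matrix.sum_apply, vecMulVec_apply]

lemma memLp_two_mul_apply [Fintype ι] {X : Ω → EuclideanSpace ℝ ι} (hX : AEMeasurable X P)
    (hX4 : Integrable (fun ω => ‖X ω‖ ^ 4) P) (i i' : ι) :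
    MemLp (fun ω => X ω i * X ω i') 2 P := by
  have hmeas : AEStronglyMeasurable (fun ω => X ω i * X ω i') P := by fun_prop
  refine (memLp_two_iff_integrable_sq hmeas).2 (hX4.mono' (hmeas.pow 2) (.of_forall fun ω => ?_))
  rw [Real.norm_of_nonneg (sq_nonneg _)]
  exact EuclideanSpace.mul_sq_le_norm_pow_four (X ω) i i'

variable [IsProbabilityMeasure P] {v : κ → Ω → EuclideanSpace ℝ ι} {j₀ : κ}

lemma memLp_empiricalSecondMoment_sub_secondMoment_apply [Fintype ι]
    (hident : ∀ j, IdentDistrib (v j) (v j₀) P P) (hv4 : Integrable (fun ω => ‖v j₀ ω‖ ^ 4) P)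
    (i i' : ι) :
    MemLp (fun ω => (empiricalSecondMoment (v · ω) - secondMoment P (v j₀)) i i') 2 P := by
  have hmem := memLp_two_mul_apply (hident j₀).aemeasurable_fst hv4 i i'
  simp_rw [empiricalSecondMoment_sub_secondMoment_apply]
  have hprod : Measurable fun x : EuclideanSpace ℝ ι => x i * x i' := by fun_prop
  have hmemj : ∀ j, MemLp (fun ω => v j ω i * v j ω i') 2 P :=
    fun j => ((hident j).comp hprod).memLp_iff.2 hmem
  have hsum : MemLp (fun ω => ∑ j, v j ω i * v j ω i') 2 P := memLp_finsetSum _ fun j _ => hmemj j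
  exact (hsum.const_mul _).sub (memLp_const _)

lemma integrable_sum_sq_empiricalSecondMoment_sub_secondMoment [Fintype ι]
    (hident : ∀ j, IdentDistrib (v j) (v j₀) P P) (hv4 : Integrable (fun ω => ‖v j₀ ω‖ ^ 4) P) :
    Integrable
      (fun ω => ∑ i, ∑ i', (empiricalSecondMoment (v · ω) - secondMoment P (v j₀)) i i' ^ 2) P :=
  integrable_finsetSum _ fun i _ => integrable_finsetSum _ fun i' _ =>
    (memLp_empiricalSecondMoment_sub_secondMoment_apply hident hv4 i i').integrable_sq

lemma integral_sum_sq_empiricalSecondMoment_sub_secondMoment_le [Fintype ι]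
    (hindep : iIndepFun v P) (hident : ∀ j, IdentDistrib (v j) (v j₀) P P)
    (hv4 : Integrable (fun ω => ‖v j₀ ω‖ ^ 4) P) :
    ∫ ω, ∑ i, ∑ i', (empiricalSecondMoment (v · ω) - secondMoment P (v j₀)) i i' ^ 2 ∂P
      ≤ (Fintype.card κ : ℝ)⁻¹ * ∫ ω, ‖v j₀ ω‖ ^ 4 ∂P := by
  have hprod (i i' : ι) : Measurable fun x : EuclideanSpace ℝ ι => x i * x i' := by fun_prop
  have hmem := memLp_two_mul_apply (hident j₀).aemeasurable_fst hv4
  have hentry (i i' : ι) :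
      ∫ ω, (empiricalSecondMoment (v · ω) - secondMoment P (v j₀)) i i' ^ 2 ∂P
        ≤ (Fintype.card κ : ℝ)⁻¹ * ∫ ω, (v j₀ ω i * v j₀ ω i') ^ 2 ∂P := by
    simp_rw [empiricalSecondMoment_sub_secondMoment_apply]
    refine (integral_sq_average_sub_eq (f := fun j ω => v j ω i * v j ω i') (hmem i i')
      (fun j j' hjj' => (hindep.comp _ fun _ => hprod i i').indepFun hjj')
      (fun j => (hident j).comp (hprod i i'))).trans_le ?_
    gcongr
    exact variance_le_expectation_sq (hmem i i').aestronglyMeasurable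
  calc ∫ ω, ∑ i, ∑ i', (empiricalSecondMoment (v · ω) - secondMoment P (v j₀)) i i' ^ 2 ∂P
      = ∑ i, ∑ i', ∫ ω, (empiricalSecondMoment (v · ω) - secondMoment P (v j₀)) i i' ^ 2 ∂P :=
        integral_sum_sum fun i i' =>
          (memLp_empiricalSecondMoment_sub_secondMoment_apply hident hv4 i i').integrable_sq
    _ ≤ ∑ i, ∑ i', (Fintype.card κ : ℝ)⁻¹ * ∫ ω, (v j₀ ω i * v j₀ ω i') ^ 2 ∂P := by
        gcongr with i _ i' _
        exact hentry i i'
    _ = (Fintype.card κ : ℝ)⁻¹ * ∫ ω, ∑ i, ∑ i', (v j₀ ω i * v j₀ ω i') ^ 2 ∂P := by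
        simp_rw [← Finset.mul_sum]
        rw [integral_sum_sum fun i i' => (hmem i i').integrable_sq]
    _ = (Fintype.card κ : ℝ)⁻¹ * ∫ ω, ‖v j₀ ω‖ ^ 4 ∂P := by
        simp_rw [EuclideanSpace.sum_sum_mul_sq]

end SecondMoment

end Probability

section Threshold

variable {d m : ℕ} {μ δ : ℝ}

lemma one_le_sqrt_two_mul_log_four_mul_div (hd : 1 ≤ d) (hδ0 : 0 < δ) (hδ1 : δ < 1) :
    1 ≤ √2 * Real.log (4 * d / δ) := by
  have hlog : 1 ≤ Real.log (4 * d / δ) := by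
    rw [Real.le_log_iff_exp_le (by positivity), le_div_iff₀ hδ0]
    nlinarith [Real.exp_one_lt_d9, (Nat.one_le_cast (α := ℝ)).2 hd]
  exact one_le_mul_of_one_le_of_one_le (Real.one_le_sqrt.2 one_le_two) hlog

lemma sqrt_two_mul_log_threshold_nonneg (hd : 1 ≤ d) (hδ0 : 0 < δ) (hδ1 : δ < 1) :
    0 ≤ √2 * μ ^ 2 / √m * δ ^ (-(1 : ℝ) / 2) * Real.log (4 * d / δ) := by
  have hfactor := one_le_sqrt_two_mul_log_four_mul_div hd hδ0 hδ1
  have hlog : 0 ≤ Real.log (4 * d / δ) := by nlinarith [Real.sqrt_nonneg 2]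
  positivity

lemma inv_mul_pow_four_le_sqrt_two_mul_log_threshold_sq_mul (hd : 1 ≤ d) (hδ0 : 0 < δ)
    (hδ1 : δ < 1) :
    (m : ℝ)⁻¹ * μ ^ 4 ≤ (√2 * μ ^ 2 / √m * δ ^ (-(1 : ℝ) / 2) * Real.log (4 * d / δ)) ^ 2 * δ := by
  have hδpow : (δ ^ (-(1 : ℝ) / 2)) ^ 2 * δ = 1 := by
    rw [← Real.rpow_natCast, ← Real.rpow_mul hδ0.le, ← Real.rpow_add_one hδ0.ne']
    norm_num
  have hfactor := one_le_sqrt_two_mul_log_four_mul_div hd hδ0 hδ1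
  calc (m : ℝ)⁻¹ * μ ^ 4 = (μ ^ 2 / √m * δ ^ (-(1 : ℝ) / 2)) ^ 2 * δ := by
        rw [mul_pow, mul_assoc, hδpow, div_pow, Real.sq_sqrt m.cast_nonneg]
        ring
    _ ≤ (√2 * Real.log (4 * d / δ) * (μ ^ 2 / √m * δ ^ (-(1 : ℝ) / 2))) ^ 2 * δ := by
        gcongr ?_ ^ 2 * δ
        exact le_mul_of_one_le_left (by positivity) hfactor
    _ = _ := by ring

end Threshold

theorem outer_product_concentration_general (d m : ℕ) (hm : 0 < m)
    {Ω : Type*} [MeasurableSpace Ω] (P : Measure Ω) [IsProbabilityMeasure P]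
    (v : Fin m → Ω → EuclideanSpace ℝ (Fin d))
    (hindep : iIndepFun v P)
    (hident : ∀ j j', IdentDistrib (v j) (v j') P P)
    (hL4 : Integrable (fun ω => ‖v ⟨0, hm⟩ ω‖ ^ 4) P)
    (μ₄ : ℝ) (hμ : μ₄ = (∫ ω, ‖v ⟨0, hm⟩ ω‖ ^ 4 ∂P) ^ ((1 : ℝ) / 4))
    (Mbar : Matrix (Fin d) (Fin d) ℝ)
    (hMbar : Mbar = Matrix.of fun i i' => ∫ ω, v ⟨0, hm⟩ ω i * v ⟨0, hm⟩ ω i' ∂P)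
    (δ : ℝ) (hδ0 : 0 < δ) (hδ1 : δ < 1) :
    ENNReal.ofReal (1 - δ) ≤
      P {ω | opNorm ((m : ℝ)⁻¹ • ∑ j, vecMulVec (v j ω) (v j ω) - Mbar)
        ≤ Real.sqrt 2 * μ₄ ^ 2 / Real.sqrt m * δ ^ (-(1 : ℝ) / 2)
            * Real.log (4 * d / δ)} := by
  obtain rfl | hd := d.eq_zero_or_pos
  · have hzero (M : Matrix (Fin 0) (Fin 0) ℝ) : opNorm M = 0 :=
      le_antisymm (by simpa using opNorm_le_sqrt_sum_sq M) (norm_nonneg _)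
    simpa [hzero] using hδ0.le
  set j₀ : Fin m := ⟨0, hm⟩
  set tstar := √2 * μ₄ ^ 2 / √m * δ ^ (-(1 : ℝ) / 2) * Real.log (4 * d / δ)
  have hident₀ (j : Fin m) : IdentDistrib (v j) (v j₀) P P := hident j j₀
  have hμ4 : ∫ ω, ‖v j₀ ω‖ ^ 4 ∂P = μ₄ ^ 4 := by
    rw [hμ, one_div]
    exact_mod_cast (Real.rpow_inv_natCast_pow (integral_nonneg fun ω => by positivity)
      four_ne_zero).symm
  have hemp (ω : Ω) :
      (m : ℝ)⁻¹ • ∑ j, vecMulVec (v j ω) (v j ω) = empiricalSecondMoment (v · ω) := by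
    simp [empiricalSecondMoment]
  have hsecond : Mbar = secondMoment P (v j₀) := hMbar
  simp_rw [hemp, hsecond]
  refine ofReal_one_sub_le_measure hδ0.le ((measure_mono fun ω (hω : ¬ _ ≤ tstar) => ?_).trans
    (measure_lt_le_of_integral_le_mul (fun ω => by positivity)
      (integrable_sum_sq_empiricalSecondMoment_sub_secondMoment hident₀ hL4) (sq_nonneg tstar) ?_))
  · exact (Real.lt_sqrt (sqrt_two_mul_log_threshold_nonneg hd hδ0 hδ1)).1
      ((not_le.1 hω).trans_le (opNorm_le_sqrt_sum_sq _))
  · calc _ ≤ (m : ℝ)⁻¹ * ∫ ω, ‖v j₀ ω‖ ^ 4 ∂P := by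
          simpa only [Fintype.card_fin] using
            integral_sum_sq_empiricalSecondMoment_sub_secondMoment_le hindep hident₀ hL4
      _ ≤ tstar ^ 2 * δ := by
          rw [hμ4]
          exact inv_mul_pow_four_le_sqrt_two_mul_log_threshold_sq_mul hd hδ0 hδ1

/-- **Matrix concentration for i.i.d. rank-one outer products.**  Let `A_j = v_j v_jᵀ` with
`v_1, …, v_m` i.i.d., `(E‖v‖⁴)^{1/4} = μ < ∞`, and `M̄ = E[A_1]`.  Then for `0 < δ < 1`,
with probability at least `1 − δ`,
`‖(1/m)∑_j A_j − M̄‖_op ≤ (√2 μ² / √m) · δ^{−1/2} · log(4d/δ)`. -/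
theorem outer_product_concentration (d m : ℕ) (hm : 0 < m)
    {Ω : Type*} [MeasurableSpace Ω] (P : Measure Ω) [IsProbabilityMeasure P]
    (v : Fin m → Ω → EuclideanSpace ℝ (Fin d)) (hmeas : ∀ j, Measurable (v j))
    (hindep : iIndepFun v P)
    (hident : ∀ j j', IdentDistrib (v j) (v j') P P)
    (hL4 : Integrable (fun ω => ‖v ⟨0, hm⟩ ω‖ ^ 4) P)
    (μ₄ : ℝ) (hμ : μ₄ = (∫ ω, ‖v ⟨0, hm⟩ ω‖ ^ 4 ∂P) ^ ((1 : ℝ) / 4))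
    (Mbar : Matrix (Fin d) (Fin d) ℝ)
    (hMbar : Mbar = Matrix.of fun i i' => ∫ ω, v ⟨0, hm⟩ ω i * v ⟨0, hm⟩ ω i' ∂P)
    (δ : ℝ) (hδ0 : 0 < δ) (hδ1 : δ < 1) :
    ENNReal.ofReal (1 - δ) ≤
      P {ω | opNorm ((m : ℝ)⁻¹ • ∑ j, vecMulVec (v j ω) (v j ω) - Mbar)
        ≤ Real.sqrt 2 * μ₄ ^ 2 / Real.sqrt m * δ ^ (-(1 : ℝ) / 2)
            * Real.log (4 * d / δ)} :=
  outer_product_concentration_general d m hm P v hindep hident hL4 μ₄ hμ Mbar hMbar δ hδ0 hδ1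
end

section
/- Define ξ(z₁, z₂) := E[Z² | z₁ ≤ Z ≤ z₂] for Z ~ N(0,1) and 0 ≤ z₁ ≤ 1 ≤ z₂. Then ξ is continuous and monotonically increasing in each argument, ξ(1,1) = 1, ξ(0, ∞) = 1, and there exists a continuous decreasing function ν: [1, ∞) → (0, 1] with ν(1) = 1, lim_{z→∞} ν(z) = 0, and ξ(ν(z), z) = 1 for all z ∈ [1, ∞). -/
/-!
Write `φ` for the standard normal density. Since `φ' x = -x φ x`, integration by parts gives
`∫ x in a..b, x² φ x = ∫ x in a..b, φ x + a φ a - b φ b`, i.e.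
`ξ(a, b) = 1 + (a φ a - b φ b) / ∫ x in a..b, φ x`. This formula makes `ξ` continuous off the
diagonal and shows that `ξ(a, b) = 1` exactly when `a φ a = b φ b`. The function `t φ t` increases
on `[0, 1]`, decreases on `[1, ∞)` and tends to `0`, so `ν z` is the unique point of `[0, 1]` where
it takes the value `z φ z`.

Monotonicity: `ξ(a, b)` is an average of `x²` over `[a, b]`, so it lies strictly between `a²` and
`b²`; hence `ξ(a, b) < b² < ξ(b, c)`, and `ξ(a, c)` is the mediant of these two fractions.
Finally `E[Z² | Z ≥ 0] = E[Z²] = 1` by the symmetry of `Z`.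
-/

open MeasureTheory ProbabilityTheory

/-- `ξ(z₁, z₂) = E[Z² | z₁ ≤ Z ≤ z₂]` for a standard Gaussian `Z`. -/
noncomputable def xi (z₁ z₂ : ℝ) : ℝ :=
  (∫ x in Set.Icc z₁ z₂, x ^ 2 ∂(gaussianReal 0 1))
    / ((gaussianReal 0 1) (Set.Icc z₁ z₂)).toReal

open Set Filter Topology

section Mediant

variable {𝕜 : Type*} [Field 𝕜] [LinearOrder 𝕜] [IsStrictOrderedRing 𝕜] {a b c d : 𝕜}

theorem div_lt_add_div_add (hb : 0 < b) (hd : 0 < d) (h : a / b < c / d) :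
    a / b < (a + c) / (b + d) := by
  rw [div_lt_div_iff₀ hb hd] at h
  rw [div_lt_div_iff₀ hb (add_pos hb hd)]
  linarith

theorem add_div_add_lt_div (hb : 0 < b) (hd : 0 < d) (h : a / b < c / d) :
    (a + c) / (b + d) < c / d := by
  rw [div_lt_div_iff₀ hb hd] at h
  rw [div_lt_div_iff₀ (add_pos hb hd) hd]
  linarith

end Mediant

theorem exists_continuous_inverse_of_strictMonoOn_Icc {f : ℝ → ℝ} {a b : ℝ} (hab : a ≤ b)
    (hf : ContinuousOn f (Icc a b)) (hmono : StrictMonoOn f (Icc a b)) :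
    ∃ h : ℝ → ℝ, Continuous h ∧ (∀ y, h y ∈ Icc a b) ∧ (∀ x ∈ Icc a b, h (f x) = x) ∧
      ∀ y ∈ Icc (f a) (f b), f (h y) = y := by
  have hfab : f a ≤ f b := hmono.monotoneOn (left_mem_Icc.2 hab) (right_mem_Icc.2 hab) hab
  let fIcc : Icc a b → Icc (f a) (f b) := fun x =>
    ⟨f x, hmono.monotoneOn (left_mem_Icc.2 hab) x.2 x.2.1,
      hmono.monotoneOn x.2 (right_mem_Icc.2 hab) x.2.2⟩
  have hsurj : Function.Surjective fIcc := fun y => by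
    obtain ⟨x, hx, hxy⟩ := intermediate_value_Icc hab hf y.2
    exact ⟨⟨x, hx⟩, Subtype.ext hxy⟩
  let e := StrictMono.orderIsoOfSurjective fIcc (fun x y hxy => hmono x.2 y.2 hxy) hsurj
  refine ⟨fun y => e.symm (projIcc (f a) (f b) hfab y), by fun_prop, fun y => Subtype.prop _,
    fun x hx => ?_, fun y hy => ?_⟩
  · have hfx : f x ∈ Icc (f a) (f b) := (fIcc ⟨x, hx⟩).2
    dsimp only
    rw [projIcc_of_mem hfab hfx]
    exact congrArg Subtype.val (e.symm_apply_apply ⟨x, hx⟩)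
  · dsimp only
    rw [projIcc_of_mem hfab hy]
    exact congrArg Subtype.val (e.apply_symm_apply ⟨y, hy⟩)

theorem setIntegral_Ici_zero_eq_half_integral {μ : Measure ℝ} (hμ : μ.map (fun x => -x) = μ)
    (h0 : μ {0} = 0) {f : ℝ → ℝ} (hf : Integrable f μ) (heven : ∀ x, f (-x) = f x) :
    ∫ x in Ici 0, f x ∂μ = (∫ x, f x ∂μ) / 2 := by
  have hsplit := integral_add_compl (measurableSet_Ici (a := (0 : ℝ))) hf
  have hreflect : ∫ x in Iio 0, f x ∂μ = ∫ x in Ioi 0, f x ∂μ := by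
    conv_lhs => rw [← hμ]
    have hneg : MeasurableEmbedding fun x : ℝ => -x := (Homeomorph.neg ℝ).measurableEmbedding
    rw [hneg.setIntegral_map]
    simp [heven]
  rw [compl_Ici, hreflect, ← integral_Ici_eq_integral_Ioi' h0] at hsplit
  linarith

theorem continuous_intervalIntegral_of_continuous {E : Type*} [NormedAddCommGroup E]
    [NormedSpace ℝ E] [CompleteSpace E] {f : ℝ → E} (hf : Continuous f) :
    Continuous fun p : ℝ × ℝ => ∫ x in p.1..p.2, f x :=
  continuous_iff_continuousAt.2 fun _ =>
    (intervalIntegral.integral_hasStrictFDerivAt (hf.intervalIntegrable _ _)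
      (hf.stronglyMeasurableAtFilter _ _) (hf.stronglyMeasurableAtFilter _ _) hf.continuousAt
      hf.continuousAt).hasFDerivAt.continuousAt

@[fun_prop]
theorem continuous_gaussianPDFReal (μ : ℝ) (v : NNReal) : Continuous (gaussianPDFReal μ v) := by
  rw [gaussianPDFReal_def]
  fun_prop

theorem intervalIntegral_gaussianPDFReal_pos {μ : ℝ} {v : NNReal} (hv : v ≠ 0) {a b : ℝ}
    (hab : a < b) : 0 < ∫ x in a..b, gaussianPDFReal μ v x :=
  intervalIntegral.intervalIntegral_pos_of_pos
    ((continuous_gaussianPDFReal μ v).intervalIntegrable a b) (gaussianPDFReal_pos μ v · hv) hab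

theorem setIntegral_gaussianReal_eq_setIntegral_mul {μ : ℝ} {v : NNReal} (hv : v ≠ 0)
    (f : ℝ → ℝ) {s : Set ℝ} (hs : MeasurableSet s) :
    ∫ x in s, f x ∂gaussianReal μ v = ∫ x in s, f x * gaussianPDFReal μ v x := by
  rw [gaussianReal_of_var_ne_zero _ hv, setIntegral_withDensity_eq_setIntegral_toReal_smul
    (measurable_gaussianPDF _ _) (ae_of_all _ fun _ => gaussianPDF_lt_top) _ hs]
  simp [toReal_gaussianPDF, mul_comm]

theorem integral_sq_gaussianReal_zero (v : NNReal) : ∫ x, x ^ 2 ∂gaussianReal 0 v = v := by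
  rw [← variance_of_integral_eq_zero measurable_id'.aemeasurable integral_id_gaussianReal]
  simp

theorem setIntegral_sq_div_measure_Ici_zero_gaussianReal {v : NNReal} (hv : v ≠ 0) :
    (∫ x in Ici (0 : ℝ), x ^ 2 ∂gaussianReal 0 v) / ((gaussianReal 0 v) (Ici (0 : ℝ))).toReal
      = v := by
  have hsymm : (gaussianReal 0 v).map (fun x => -x) = gaussianReal 0 v := by
    simp [gaussianReal_map_neg]
  have h0 : gaussianReal 0 v {0} = 0 := (nullSingletonClass_gaussianReal hv).measure_singleton 0
  have hmass : ((gaussianReal 0 v) (Ici (0 : ℝ))).toReal = 1 / 2 := by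
    simpa [measureReal_def] using
      setIntegral_Ici_zero_eq_half_integral hsymm h0 (integrable_const (1 : ℝ)) fun _ => rfl
  have hsq : Integrable (fun x : ℝ => x ^ 2) (gaussianReal 0 v) :=
    (memLp_id_gaussianReal 2).integrable_sq
  rw [setIntegral_Ici_zero_eq_half_integral hsymm h0 hsq neg_sq, integral_sq_gaussianReal_zero,
    hmass]
  ring

section StandardGaussian

local notation "φ" => gaussianPDFReal 0 1

variable {a b c : ℝ}

theorem gaussianPDFReal_zero_one_eq :
    φ = fun x => (√(2 * Real.pi))⁻¹ * Real.exp (-x ^ 2 / 2) := by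
  funext x
  simp [gaussianPDFReal]

theorem hasDerivAt_gaussianPDFReal_zero_one (x : ℝ) : HasDerivAt φ (-x * φ x) x := by
  have hexp : HasDerivAt (fun x : ℝ => -x ^ 2 / 2) (-x) x :=
    ((hasDerivAt_pow 2 x).neg.div_const 2).congr_deriv (by push_cast; ring)
  rw [gaussianPDFReal_zero_one_eq]
  exact (hexp.exp.const_mul _).congr_deriv (by ring)

theorem integral_sq_mul_gaussianPDFReal_zero_one (a b : ℝ) :
    ∫ x in a..b, x ^ 2 * φ x = (∫ x in a..b, φ x) + (a * φ a - b * φ b) := by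
  have hparts := intervalIntegral.integral_mul_deriv_eq_deriv_mul (a := a) (b := b)
    (u := id) (u' := fun _ => 1) (v := fun x => -φ x) (v' := fun x => x * φ x)
    (fun x _ => hasDerivAt_id x)
    (fun x _ => (hasDerivAt_gaussianPDFReal_zero_one x).neg.congr_deriv (by ring))
    (intervalIntegrable_const (c := (1 : ℝ)))
    ((continuous_id.mul (continuous_gaussianPDFReal 0 1)).intervalIntegrable a b)
  simp only [id, one_mul, intervalIntegral.integral_neg] at hparts
  calc ∫ x in a..b, x ^ 2 * φ x = ∫ x in a..b, x * (x * φ x) := by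
        congr 1; funext x; ring
    _ = (∫ x in a..b, φ x) + (a * φ a - b * φ b) := by rw [hparts]; ring

theorem hasDerivAt_mul_gaussianPDFReal_zero_one (t : ℝ) :
    HasDerivAt (fun t => t * φ t) ((1 - t ^ 2) * φ t) t :=
  ((hasDerivAt_id t).mul (hasDerivAt_gaussianPDFReal_zero_one t)).congr_deriv
    (by simp only [id]; ring)

theorem strictMonoOn_mul_gaussianPDFReal_zero_one :
    StrictMonoOn (fun t => t * φ t) (Icc 0 1) := by
  refine strictMonoOn_of_deriv_pos (convex_Icc 0 1) (by fun_prop) fun t ht => ?_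
  rw [interior_Icc] at ht
  rw [(hasDerivAt_mul_gaussianPDFReal_zero_one t).deriv]
  exact mul_pos (by nlinarith [ht.1, ht.2]) (gaussianPDFReal_pos 0 1 t one_ne_zero)

theorem strictAntiOn_mul_gaussianPDFReal_zero_one :
    StrictAntiOn (fun t => t * φ t) (Ici 1) := by
  refine strictAntiOn_of_deriv_neg (convex_Ici 1) (by fun_prop) fun t ht => ?_
  rw [interior_Ici] at ht
  rw [(hasDerivAt_mul_gaussianPDFReal_zero_one t).deriv]
  exact mul_neg_of_neg_of_pos (by nlinarith [mem_Ioi.1 ht])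
    (gaussianPDFReal_pos 0 1 t one_ne_zero)

theorem tendsto_mul_gaussianPDFReal_zero_one_atTop :
    Tendsto (fun t => t * φ t) atTop (𝓝 0) := by
  have h := ((tendsto_rpow_abs_mul_exp_neg_mul_sq_cocompact (a := 1 / 2) (by norm_num) 1)
    |>.mono_left atTop_le_cocompact).const_mul (√(2 * Real.pi))⁻¹
  rw [mul_zero] at h
  refine h.congr' ?_
  filter_upwards [eventually_ge_atTop 0] with t ht
  rw [Real.rpow_one, abs_of_nonneg ht, gaussianPDFReal_zero_one_eq]
  ring_nf

theorem xi_eq_div (hab : a ≤ b) :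
    xi a b = (∫ x in a..b, x ^ 2 * φ x) / ∫ x in a..b, φ x := by
  have h (f : ℝ → ℝ) : ∫ x in Icc a b, f x ∂gaussianReal 0 1 = ∫ x in a..b, f x * φ x := by
    rw [setIntegral_gaussianReal_eq_setIntegral_mul one_ne_zero f measurableSet_Icc,
      integral_Icc_eq_integral_Ioc, intervalIntegral.integral_of_le hab]
  have hmass : ((gaussianReal 0 1) (Icc a b)).toReal = ∫ x in a..b, φ x := by
    simpa [measureReal_def] using h fun _ => 1
  rw [xi, hmass, h]

theorem xi_eq_one_add (hab : a < b) :
    xi a b = 1 + (a * φ a - b * φ b) / ∫ x in a..b, φ x := by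
  rw [xi_eq_div hab.le, integral_sq_mul_gaussianPDFReal_zero_one, add_div,
    div_self (intervalIntegral_gaussianPDFReal_pos one_ne_zero hab).ne']

theorem sq_lt_xi (ha : 0 ≤ a) (hab : a < b) : a ^ 2 < xi a b := by
  rw [xi_eq_div hab.le, lt_div_iff₀ (intervalIntegral_gaussianPDFReal_pos one_ne_zero hab),
    ← intervalIntegral.integral_const_mul]
  refine intervalIntegral.integral_lt_integral_of_continuousOn_of_le_of_exists_lt hab
    (by fun_prop) (by fun_prop) (fun x hx => ?_) ⟨b, right_mem_Icc.2 hab.le, ?_⟩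
  · exact mul_le_mul_of_nonneg_right (pow_le_pow_left₀ ha hx.1.le 2)
      (gaussianPDFReal_nonneg _ _ _)
  · exact mul_lt_mul_of_pos_right (pow_lt_pow_left₀ hab ha two_ne_zero)
      (gaussianPDFReal_pos 0 1 b one_ne_zero)

theorem xi_lt_sq (ha : 0 ≤ a) (hab : a < b) : xi a b < b ^ 2 := by
  rw [xi_eq_div hab.le, div_lt_iff₀ (intervalIntegral_gaussianPDFReal_pos one_ne_zero hab),
    ← intervalIntegral.integral_const_mul]
  refine intervalIntegral.integral_lt_integral_of_continuousOn_of_le_of_exists_lt hab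
    (by fun_prop) (by fun_prop) (fun x hx => ?_) ⟨a, left_mem_Icc.2 hab.le, ?_⟩
  · exact mul_le_mul_of_nonneg_right (pow_le_pow_left₀ (ha.trans hx.1.le) hx.2 2)
      (gaussianPDFReal_nonneg _ _ _)
  · exact mul_lt_mul_of_pos_right (pow_lt_pow_left₀ hab ha two_ne_zero)
      (gaussianPDFReal_pos 0 1 a one_ne_zero)

theorem xi_lt_xi_and_xi_lt_xi (ha : 0 ≤ a) (hab : a < b) (hbc : b < c) :
    xi a b < xi a c ∧ xi a c < xi b c := by
  have hlt : xi a b < xi b c := (xi_lt_sq ha hab).trans (sq_lt_xi (ha.trans hab.le) hbc)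
  have hsplit (f : ℝ → ℝ) (hf : Continuous f) :
      ∫ x in a..c, f x = (∫ x in a..b, f x) + ∫ x in b..c, f x :=
    (intervalIntegral.integral_add_adjacent_intervals (hf.intervalIntegrable _ _)
      (hf.intervalIntegrable _ _)).symm
  have hP₁ := intervalIntegral_gaussianPDFReal_pos (μ := 0) one_ne_zero hab
  have hP₂ := intervalIntegral_gaussianPDFReal_pos (μ := 0) one_ne_zero hbc
  rw [xi_eq_div hab.le, xi_eq_div hbc.le] at hlt
  rw [xi_eq_div hab.le, xi_eq_div hbc.le, xi_eq_div (hab.trans hbc).le, hsplit _ (by fun_prop),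
    hsplit _ (by fun_prop)]
  exact ⟨div_lt_add_div_add hP₁ hP₂ hlt, add_div_add_lt_div hP₁ hP₂ hlt⟩

theorem strictMonoOn_xi_left (b : ℝ) : StrictMonoOn (fun a => xi a b) (Ico 0 b) :=
  fun _ ha _ ha' haa' => (xi_lt_xi_and_xi_lt_xi ha.1 haa' ha'.2).2

theorem strictMonoOn_xi_right (ha : 0 ≤ a) : StrictMonoOn (fun b => xi a b) (Ioi a) :=
  fun _ hb _ _ hbb' => (xi_lt_xi_and_xi_lt_xi ha hb hbb').1

theorem continuousOn_xi : ContinuousOn (fun p : ℝ × ℝ => xi p.1 p.2) {p | p.1 < p.2} := by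
  refine ContinuousOn.congr ?_ fun p (hp : p.1 < p.2) => xi_eq_one_add hp
  exact continuousOn_const.add <| ContinuousOn.div (by fun_prop)
    (continuous_intervalIntegral_of_continuous (continuous_gaussianPDFReal 0 1)).continuousOn
    fun p (hp : p.1 < p.2) => (intervalIntegral_gaussianPDFReal_pos one_ne_zero hp).ne'

theorem tendsto_xi_nhdsWithin_diag (c : ℝ) :
    Tendsto (fun p : ℝ × ℝ => xi p.1 p.2) (𝓝[{p | 0 ≤ p.1 ∧ p.1 < p.2}] (c, c)) (𝓝 (c ^ 2)) := by
  have hfst := ((continuous_fst.pow 2).tendsto (c, c)).mono_left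
    (nhdsWithin_le_nhds (s := {p : ℝ × ℝ | 0 ≤ p.1 ∧ p.1 < p.2}))
  have hsnd := ((continuous_snd.pow 2).tendsto (c, c)).mono_left
    (nhdsWithin_le_nhds (s := {p : ℝ × ℝ | 0 ≤ p.1 ∧ p.1 < p.2}))
  refine tendsto_of_tendsto_of_tendsto_of_le_of_le' hfst hsnd ?_ ?_ <;>
    filter_upwards [self_mem_nhdsWithin] with p hp
  · exact (sq_lt_xi hp.1 hp.2).le
  · exact (xi_lt_sq hp.1 hp.2).le

theorem xi_eq_one_of_mul_gaussianPDFReal_eq (hab : a < b) (h : a * φ a = b * φ b) :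
    xi a b = 1 := by
  rw [xi_eq_one_add hab, h, sub_self, zero_div, add_zero]

theorem exists_strictAntiOn_xi_eq_one : ∃ ν : ℝ → ℝ, Continuous ν ∧ StrictAntiOn ν (Ici 1) ∧
    ν 1 = 1 ∧ (∀ z, 1 ≤ z → ν z ∈ Ioc (0 : ℝ) 1) ∧ Tendsto ν atTop (𝓝 0) ∧
    ∀ z, 1 < z → xi (ν z) z = 1 := by
  obtain ⟨h, hcont, hmaps, hleft, hright⟩ := exists_continuous_inverse_of_strictMonoOn_Icc
    zero_le_one (by fun_prop) strictMonoOn_mul_gaussianPDFReal_zero_one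
  have hpos (t : ℝ) (ht : 0 < t) : 0 < t * φ t :=
    mul_pos ht (gaussianPDFReal_pos 0 1 t one_ne_zero)
  have hinv (z : ℝ) (hz : 1 ≤ z) : h (z * φ z) * φ (h (z * φ z)) = z * φ z := hright _
    ⟨by simpa using (hpos z (zero_lt_one.trans_le hz)).le,
      strictAntiOn_mul_gaussianPDFReal_zero_one.antitoneOn (mem_Ici.2 le_rfl) hz hz⟩
  have hmem (z : ℝ) (hz : 1 ≤ z) : h (z * φ z) ∈ Ioc (0 : ℝ) 1 := by
    refine ⟨(hmaps _).1.lt_of_ne fun h0 => (hpos z (zero_lt_one.trans_le hz)).ne' ?_, (hmaps _).2⟩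
    rw [← hinv z hz, ← h0, zero_mul]
  refine ⟨fun z => h (z * φ z), by fun_prop, fun z hz z' hz' hzz' => ?_,
    hleft 1 ⟨zero_le_one, le_rfl⟩, hmem, ?_, fun z hz => ?_⟩
  · refine (strictMonoOn_mul_gaussianPDFReal_zero_one.lt_iff_lt (hmaps _) (hmaps _)).1 ?_
    rw [hinv z hz, hinv z' hz']
    exact strictAntiOn_mul_gaussianPDFReal_zero_one hz hz' hzz'
  · have hh0 : h 0 = 0 := by simpa using hleft 0 ⟨le_rfl, zero_le_one⟩
    have hlim := (hcont.tendsto 0).comp tendsto_mul_gaussianPDFReal_zero_one_atTop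
    rwa [hh0] at hlim
  · exact xi_eq_one_of_mul_gaussianPDFReal_eq ((hmem z hz.le).2.trans_lt hz) (hinv z hz.le)

end StandardGaussian

/-- **Properties of the conditional second moment `ξ` and existence of `ν`.**
`ξ` is continuous and strictly increasing in each argument on `{0 ≤ z₁ ≤ 1 ≤ z₂}`,
`ξ → 1` at the degenerate corner `(1,1)`, `E[Z² | Z ≥ 0] = 1`, and there is a continuous
strictly decreasing `ν : [1,∞) → (0,1]` with `ν(1) = 1`, `ν(z) → 0` as `z → ∞`, and
`ξ(ν(z), z) = 1` for all `z > 1`. -/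
theorem xi_properties :
    ContinuousOn (fun p : ℝ × ℝ => xi p.1 p.2)
      {p : ℝ × ℝ | 0 ≤ p.1 ∧ p.1 ≤ 1 ∧ 1 ≤ p.2 ∧ p ≠ (1, 1)}
    ∧ (∀ z₂ : ℝ, 1 < z₂ → StrictMonoOn (fun z₁ => xi z₁ z₂) (Set.Icc 0 1))
    ∧ (∀ z₁ : ℝ, 0 ≤ z₁ → z₁ < 1 → StrictMonoOn (fun z₂ => xi z₁ z₂) (Set.Ici 1))
    ∧ Filter.Tendsto (fun p : ℝ × ℝ => xi p.1 p.2)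
        (nhdsWithin (1, 1) {p : ℝ × ℝ | 0 ≤ p.1 ∧ p.1 ≤ 1 ∧ 1 ≤ p.2 ∧ p ≠ (1, 1)})
        (nhds 1)
    ∧ (∫ x in Set.Ici (0 : ℝ), x ^ 2 ∂(gaussianReal 0 1))
        / ((gaussianReal 0 1) (Set.Ici (0 : ℝ))).toReal = 1
    ∧ ∃ ν : ℝ → ℝ, ContinuousOn ν (Set.Ici 1) ∧ StrictAntiOn ν (Set.Ici 1)
        ∧ ν 1 = 1 ∧ (∀ z, 1 ≤ z → ν z ∈ Set.Ioc (0 : ℝ) 1)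
        ∧ Filter.Tendsto ν Filter.atTop (nhds 0)
        ∧ ∀ z, 1 < z → xi (ν z) z = 1 := by
  have hS : {p : ℝ × ℝ | 0 ≤ p.1 ∧ p.1 ≤ 1 ∧ 1 ≤ p.2 ∧ p ≠ (1, 1)} ⊆
      {p | 0 ≤ p.1 ∧ p.1 < p.2} := by
    rintro ⟨a, b⟩ ⟨ha, ha1, hb1, hne⟩
    refine ⟨ha, lt_of_le_of_ne (ha1.trans hb1) fun hab => hne ?_⟩
    simp only [Prod.mk.injEq]
    constructor <;> linarith
  obtain ⟨ν, hν_cont, hν⟩ := exists_strictAntiOn_xi_eq_one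
  refine ⟨continuousOn_xi.mono fun p hp => (hS hp).2,
    fun z₂ hz₂ => (strictMonoOn_xi_left z₂).mono fun a ha => ⟨ha.1, ha.2.trans_lt hz₂⟩,
    fun z₁ h₀ h₁ => (strictMonoOn_xi_right h₀).mono fun b hb => h₁.trans_le hb,
    ?_, by simpa using setIntegral_sq_div_measure_Ici_zero_gaussianReal one_ne_zero,
    ν, hν_cont.continuousOn, hν⟩
  simpa using (tendsto_xi_nhdsWithin_diag 1).mono_left (nhdsWithin_mono _ hS)
end
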